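/- Assume S ≠ ∅ and T ≠ ∅, and assume the lower image 𝒟* has at least one vertex. Then 𝒫 = {y ∈ ℝ^q | φ(y, t*) ≥ 0 for every vertex t* of 𝒟*}; that is, a point y belongs to the upper image 𝒫 if and only if φ(y, t*) ≥ 0 for all vertices t* of 𝒟*. -/

import Mathlib

/-!
Weak duality: for `y = Px + Yl ∈ 𝒫` and `t* = D*(u, w) - k e_q ∈ 𝒟*` one has
`φ(y, t*) = wᵀy - bᵀu + k ≥ uᵀ(Ax - b) + (Yᵀw)ᵀl ≥ 0`.

Conversely, if `y ∉ 𝒫`, Farkas' lemma (finitely generated cones are closed, by a conic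
Carathéodory argument) gives `(u, w)` with `u ≥ 0`, `Aᵀu = Pᵀw`, `Yᵀw ≥ 0` and `wᵀy < bᵀu`.
As `c ∈ int C`, `cᵀw > 0`, and rescaling to `cᵀw = 1` gives a point of `𝒟*` where
`φ(y, ·) < 0`. The same interior point bounds the slice `{w | Yᵀw ≥ 0, cᵀw = 1}`, so the
affine function `φ(y, ·)` has compact sublevel sets on the closed set `𝒟*`. Its set of
minimisers is then a nonempty compact exposed face of `𝒟*`; an extreme point of that face
(Krein–Milman) is a vertex of `𝒟*` at which `φ(y, ·) < 0`.
-/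

open Set Function Matrix

section FinitelyGeneratedCone

variable {ι E : Type*} [Fintype ι] [AddCommGroup E] [Module ℝ E]

theorem exists_nonneg_support_ssubset_of_mem_ker {f : (ι → ℝ) →ₗ[ℝ] E} {z d : ι → ℝ} (hz : 0 ≤ z)
    (hd : d ≠ 0) (hdz : support d ⊆ support z) (hfd : f d = 0) :
    ∃ z', 0 ≤ z' ∧ f z' = f z ∧ support z' ⊂ support z := by
  classical
  wlog hpos : ∃ i, 0 < d i generalizing d
  · obtain ⟨i, hi⟩ := Function.ne_iff.mp hd
    refine this (d := -d) (neg_ne_zero.mpr hd) (by rwa [support_neg]) (by simp [hfd])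
      ⟨i, ?_⟩
    push Not at hpos
    simpa using lt_of_le_of_ne (hpos i) hi
  obtain ⟨i₀, hi₀, hmin⟩ := (Finset.univ.filter fun i => 0 < d i).exists_min_image
    (fun i => z i / d i) (by simpa [Finset.Nonempty] using hpos)
  have hdi₀ : 0 < d i₀ := (Finset.mem_filter.mp hi₀).2
  -- move from `z` along `-d` until the first coordinate of `z` vanishes
  set t := z i₀ / d i₀
  have ht : 0 ≤ t := div_nonneg (hz i₀) hdi₀.le
  refine ⟨z - t • d, fun i => ?_, by simp [hfd], ?_⟩
  · change 0 ≤ z i - t * d i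
    rcases le_or_gt (d i) 0 with hdi | hdi
    · linarith [mul_nonpos_of_nonneg_of_nonpos ht hdi, show 0 ≤ z i from hz i]
    · linarith [(le_div_iff₀ hdi).mp (hmin i (by simpa using hdi))]
  · have hsub : support (z - t • d) ⊆ support z := fun i hi => by
      by_contra hzi
      have hdi : d i = 0 := notMem_support.mp fun h => hzi (hdz h)
      exact hi (by simp [notMem_support.mp hzi, hdi])
    refine (ssubset_iff_of_subset hsub).mpr ⟨i₀, hdz hdi₀.ne', ?_⟩
    simp [t, div_mul_cancel₀ _ hdi₀.ne']

theorem exists_nonneg_eq_with_independent_support (f : (ι → ℝ) →ₗ[ℝ] E) {z : ι → ℝ} (hz : 0 ≤ z) :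
    ∃ z', 0 ≤ z' ∧ f z' = f z ∧ ∀ d, support d ⊆ support z' → f d = 0 → d = 0 := by
  obtain ⟨_, ⟨z', ⟨hz', hfz'⟩, rfl⟩, hmin⟩ := wellFounded_lt.has_min
    (support '' {z' | 0 ≤ z' ∧ f z' = f z}) ⟨_, z, ⟨hz, rfl⟩, rfl⟩
  refine ⟨z', hz', hfz', fun d hd hfd => ?_⟩
  by_contra hd0
  obtain ⟨z'', hz'', hfz'', hlt⟩ := exists_nonneg_support_ssubset_of_mem_ker hz' hd0 hd hfd
  exact hmin _ ⟨z'', ⟨hz'', hfz''.trans hfz'⟩, rfl⟩ hlt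

variable [TopologicalSpace E] [IsTopologicalAddGroup E] [ContinuousSMul ℝ E] [T2Space E]

theorem LinearMap.isClosed_image_Ici_zero (f : (ι → ℝ) →ₗ[ℝ] E) : IsClosed (f '' Ici 0) := by
  classical
  have extend_apply_of_notMem {s : Set ι} (z : s → ℝ) {i : ι} (hi : i ∉ s) :
      Subtype.val.extend z 0 i = 0 := extend_val_apply' hi
  -- Carathéodory: `f '' Ici 0` is a finite union of images of orthants under injective maps
  let g (s : Set ι) : (s → ℝ) →ₗ[ℝ] E := f ∘ₗ ExtendByZero.linearMap ℝ Subtype.val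
  have hpieces : f '' Ici 0 =
      ⋃ s ∈ {s : Set ι | ∀ d, support d ⊆ s → f d = 0 → d = 0}, g s '' Ici 0 := by
    ext x
    simp only [mem_image, mem_Ici, mem_iUnion, mem_ofPred_eq]
    constructor
    · rintro ⟨z, hz, rfl⟩
      obtain ⟨z', hz', hfz', hker⟩ := exists_nonneg_eq_with_independent_support f hz
      refine ⟨support z', hker, fun i => z' i, fun i => hz' i, ?_⟩
      rw [← hfz']
      refine congrArg f (funext fun i => ?_)
      rw [ExtendByZero.linearMap_apply]
      by_cases hi : i ∈ support z'
      · exact extend_val_apply hi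
      · simp [notMem_support.mp hi]
    · rintro ⟨s, -, z, hz, rfl⟩
      refine ⟨ExtendByZero.linearMap ℝ Subtype.val z, fun i => ?_, rfl⟩
      by_cases hi : i ∈ s
      · simpa [extend_val_apply hi] using hz ⟨i, hi⟩
      · simp [extend_apply_of_notMem _ hi]
  rw [hpieces]
  refine (toFinite _).isClosed_biUnion fun s hs => ?_
  refine (LinearMap.isClosedEmbedding_of_injective (f := g s) ?_).isClosedMap _ isClosed_Ici
  refine LinearMap.ker_eq_bot'.mpr fun z hz => funext fun i => ?_
  have hzero := hs (ExtendByZero.linearMap ℝ Subtype.val z)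
    (fun j hj => by_contra fun hjs => hj (extend_apply_of_notMem z hjs)) hz
  simpa [extend_val_apply i.2] using congrFun hzero i

end FinitelyGeneratedCone

theorem ContinuousLinearMap.apply_eq_dotProduct {κ : Type*} [Fintype κ] [DecidableEq κ]
    (f : (κ → ℝ) →L[ℝ] ℝ) (x : κ → ℝ) :
    f x = (fun i => f (Pi.single i 1)) ⬝ᵥ x := by
  conv_lhs => rw [pi_eq_sum_univ' x]
  simp [dotProduct, mul_comm]

namespace Matrix

variable {κ ι ι' : Type*} [Fintype κ] [Fintype ι] [Fintype ι']

theorem farkas (M : Matrix κ ι ℝ) {v : κ → ℝ} (hv : v ∉ M.mulVec '' Ici 0) :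
    ∃ a : κ → ℝ, 0 ≤ a ᵥ* M ∧ a ⬝ᵥ v < 0 := by
  classical
  have hclosed : IsClosed (M.mulVec '' Ici 0) := M.mulVecLin.isClosed_image_Ici_zero
  obtain ⟨f, hf, hfv⟩ := ProperCone.hyperplane_separation_point
    ((ProperCone.positive ℝ (ι → ℝ)).map (LinearMap.toContinuousLinearMap M.mulVecLin))
    (x₀ := v) (by simpa [Matrix.coe_mulVecLin, hclosed.closure_eq] using hv)
  refine ⟨fun i => f (Pi.single i 1), fun j => ?_, by rwa [← f.apply_eq_dotProduct]⟩
  have := hf (M *ᵥ Pi.single j 1) (subset_closure ⟨_, Pi.single_nonneg.mpr zero_le_one, rfl⟩)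
  rwa [f.apply_eq_dotProduct, dotProduct_mulVec, dotProduct_single_one] at this

theorem farkas_mixed (N : Matrix κ ι' ℝ) (M : Matrix κ ι ℝ) {v : κ → ℝ}
    (hv : ∀ x z, 0 ≤ z → N *ᵥ x + M *ᵥ z ≠ v) :
    ∃ a : κ → ℝ, a ᵥ* N = 0 ∧ 0 ≤ a ᵥ* M ∧ a ⬝ᵥ v < 0 := by
  -- the free variables are written as `x⁺ - x⁻` with `x⁺, x⁻ ≥ 0`
  obtain ⟨a, ha, hav⟩ := farkas (fromCols (fromCols N (-N)) M) (v := v) <| by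
    rintro ⟨z, hz, hzv⟩
    refine hv (z ∘ Sum.inl ∘ Sum.inl - z ∘ Sum.inl ∘ Sum.inr) (z ∘ Sum.inr)
      (fun i => hz (Sum.inr i)) ?_
    rw [← hzv]
    simp [Matrix.neg_mulVec, sub_eq_add_neg, Function.comp_def, mulVec_add, mulVec_neg]
  simp only [vecMul_fromCols, vecMul_neg] at ha
  refine ⟨a, le_antisymm (fun i => ?_) (fun i => ha (Sum.inl (Sum.inl i))),
    fun i => ha (Sum.inr i), hav⟩
  simpa using ha (Sum.inl (Sum.inr i))

end Matrix

theorem exists_pos_mul_abs_le_dotProduct {κ : Type*} [Fintype κ] {C : Set (κ → ℝ)}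
    {c : κ → ℝ} (hc : c ∈ interior C) :
    ∃ ε > 0, ∀ w : κ → ℝ, (∀ x ∈ C, 0 ≤ x ⬝ᵥ w) → ∀ i, ε * |w i| ≤ c ⬝ᵥ w := by
  classical
  obtain ⟨δ, hδ, hball⟩ := Metric.mem_nhds_iff.mp (mem_interior_iff_mem_nhds.mp hc)
  refine ⟨δ / 2, half_pos hδ, fun w hw i => ?_⟩
  have key (σ : ℝ) (hσ : |σ| = 1) : δ / 2 * (σ * w i) ≤ c ⬝ᵥ w := by
    have hmem : c - (δ / 2 * σ) • Pi.single i 1 ∈ C := hball <| by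
      rw [Metric.mem_ball, dist_eq_norm, sub_sub_cancel_left, norm_neg, norm_smul,
        Pi.norm_single, norm_one, mul_one, Real.norm_eq_abs, abs_mul, hσ, mul_one,
        abs_of_pos (half_pos hδ)]
      linarith
    have := hw _ hmem
    rw [sub_dotProduct, smul_dotProduct, single_dotProduct, one_mul, smul_eq_mul] at this
    linarith
  rcases abs_cases (w i) with ⟨h, -⟩ | ⟨h, -⟩
  · simpa [h] using key 1 (by simp)
  · simpa [h] using key (-1) (by simp)

theorem Matrix.dotProduct_nonneg_of_mem_image_Ici {κ ι : Type*} [Fintype κ] [Fintype ι]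
    {Y : Matrix κ ι ℝ} {w x : κ → ℝ} (hw : 0 ≤ Yᵀ *ᵥ w) (hx : x ∈ Y.mulVec '' Ici 0) :
    0 ≤ x ⬝ᵥ w := by
  obtain ⟨l, hl, rfl⟩ := hx
  rw [dotProduct_comm, dotProduct_mulVec, ← mulVec_transpose]
  exact dotProduct_nonneg_of_nonneg hw hl

section InteriorOfCone

variable {κ ι : Type*} [Fintype κ] [Fintype ι] {Y : Matrix κ ι ℝ} {c : κ → ℝ}

theorem exists_norm_le_of_mem_interior (hc : c ∈ interior (Y.mulVec '' Ici 0)) :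
    ∃ R, ∀ w, 0 ≤ Yᵀ *ᵥ w → c ⬝ᵥ w = 1 → ‖w‖ ≤ R := by
  obtain ⟨ε, hε, hle⟩ := exists_pos_mul_abs_le_dotProduct hc
  refine ⟨ε⁻¹, fun w hw hcw => (pi_norm_le_iff_of_nonneg (inv_nonneg.mpr hε.le)).mpr fun i => ?_⟩
  have := hle w (fun x hx => dotProduct_nonneg_of_mem_image_Ici hw hx) i
  rw [Real.norm_eq_abs, ← one_div, le_div_iff₀' hε]
  linarith

theorem dotProduct_pos_of_mem_interior (hc : c ∈ interior (Y.mulVec '' Ici 0)) {w : κ → ℝ}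
    (hw : 0 ≤ Yᵀ *ᵥ w) (hw0 : w ≠ 0) : 0 < c ⬝ᵥ w := by
  obtain ⟨ε, hε, hle⟩ := exists_pos_mul_abs_le_dotProduct hc
  obtain ⟨i, hi⟩ := Function.ne_iff.mp hw0
  exact (mul_pos hε (abs_pos.mpr hi)).trans_le
    (hle w (fun x hx => dotProduct_nonneg_of_mem_image_Ici hw hx) i)

end InteriorOfCone

theorem exists_mem_extremePoints_forall_le {E : Type*} [AddCommGroup E] [Module ℝ E]
    [TopologicalSpace E] [T2Space E] [IsTopologicalAddGroup E] [ContinuousSMul ℝ E]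
    [LocallyConvexSpace ℝ E] {D : Set E} (hD : IsClosed D) (l : StrongDual ℝ E) {x₀ : E}
    (hx₀ : x₀ ∈ D) (hK : IsCompact (D ∩ {x | l x ≤ l x₀})) :
    ∃ e ∈ D.extremePoints ℝ, ∀ x ∈ D, l e ≤ l x := by
  -- the minimisers of `l` on `D` form a compact exposed face of `D`
  obtain ⟨x₁, hx₁, hmin⟩ :=
    hK.exists_isMinOn ⟨x₀, hx₀, le_refl (l x₀)⟩ l.continuous.continuousOn
  have hx₁F : x₁ ∈ (-l).toExposed D := ⟨hx₁.1, fun x hx => by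
    rcases le_or_gt (l x) (l x₀) with h | h
    · simpa using hmin ⟨hx, h⟩
    · simpa using hx₁.2.trans h.le⟩
  have hFK : (-l).toExposed D ⊆ D ∩ {x | l x ≤ l x₀} := fun x hx =>
    ⟨hx.1, by simpa using hx.2 x₀ hx₀⟩
  have hexposed := ContinuousLinearMap.toExposed.isExposed (l := -l) (A := D) (𝕜 := ℝ)
  obtain ⟨e, he⟩ := (hK.of_isClosed_subset (hexposed.isClosed hD) hFK).extremePoints_nonempty
    ⟨x₁, hx₁F⟩
  exact ⟨e, hexposed.isExtreme.extremePoints_subset_extremePoints he,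
    fun x hx => by simpa using he.1.2 x hx⟩

theorem dotProduct_le_of_feasible {κ ι ν : Type*} [Fintype κ] [Fintype ι] [Fintype ν]
    {A : Matrix κ ι ℝ} {P : Matrix ν ι ℝ} {b u : κ → ℝ} {w : ν → ℝ} {x : ι → ℝ}
    (hu : 0 ≤ u) (hAP : Aᵀ *ᵥ u = Pᵀ *ᵥ w) (hx : b ≤ A *ᵥ x) : b ⬝ᵥ u ≤ w ⬝ᵥ (P *ᵥ x) := by
  rw [dotProduct_mulVec, ← mulVec_transpose, ← hAP, mulVec_transpose, ← dotProduct_mulVec,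
    dotProduct_comm b]
  exact dotProduct_le_dotProduct_of_nonneg_left hx hu

theorem exists_dual_dotProduct_lt_of_forall_ne {κ ι ν μ : Type*} [Fintype κ] [Fintype ι]
    [Fintype ν] [Fintype μ] (A : Matrix κ ι ℝ) (P : Matrix ν ι ℝ) (Y : Matrix ν μ ℝ)
    {b : κ → ℝ} {y : ν → ℝ} (hy : ∀ x l, b ≤ A *ᵥ x → 0 ≤ l → P *ᵥ x + Y *ᵥ l ≠ y) :
    ∃ u w, 0 ≤ u ∧ Aᵀ *ᵥ u = Pᵀ *ᵥ w ∧ 0 ≤ Yᵀ *ᵥ w ∧ w ⬝ᵥ y < b ⬝ᵥ u := by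
  classical
  -- the slack `Ax - b` is the second block of nonnegative variables
  obtain ⟨a, haN, haM, hav⟩ := farkas_mixed (fromRows P A) (fromBlocks Y 0 0 (-1 : Matrix κ κ ℝ))
    (v := Sum.elim y b) <| by
    intro x z hz h
    simp only [fromRows_mulVec, fromBlocks_mulVec, zero_mulVec, add_zero, zero_add, neg_mulVec,
      one_mulVec, ← Sum.elim_add_add, Sum.elim_eq_iff] at h
    refine hy x (z ∘ Sum.inl) (fun i => ?_) (fun i => hz (Sum.inl i)) h.1
    have := congrFun h.2 i
    simp only [Pi.add_apply, Pi.neg_apply, Function.comp_apply] at this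
    linarith [show 0 ≤ z (Sum.inr i) from hz (Sum.inr i)]
  obtain ⟨w, v, rfl⟩ : ∃ w v, a = Sum.elim w v := ⟨_, _, (Sum.elim_comp_inl_inr a).symm⟩
  simp only [vecMul_fromRows, vecMul_fromBlocks, Sum.elim_comp_inl, Sum.elim_comp_inr,
    vecMul_zero, vecMul_neg, vecMul_one, add_zero, zero_add] at haN haM
  rw [sumElim_dotProduct_sumElim] at hav
  refine ⟨-v, w, fun i => by simpa using haM (Sum.inr i), ?_,
    fun j => by simpa [mulVec_transpose] using haM (Sum.inl j), ?_⟩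
  · rw [mulVec_transpose, mulVec_transpose, neg_vecMul, neg_eq_iff_add_eq_zero, add_comm, haN]
  · rw [dotProduct_neg]; linarith [dotProduct_comm v b]

theorem Matrix.isClosed_setOf_exists_nonneg_le {κ ι : Type*} [Fintype κ] [Fintype ι]
    (B : Matrix κ ι ℝ) (b : ι → ℝ) :
    IsClosed {p : (κ → ℝ) × ℝ | ∃ u, 0 ≤ u ∧ B *ᵥ u = p.1 ∧ p.2 ≤ b ⬝ᵥ u} := by
  classical
  -- the slack `bᵀu - p.2` is an extra nonnegative variable
  let M : Matrix (κ ⊕ Unit) (ι ⊕ Unit) ℝ := fromBlocks B 0 (replicateRow Unit b) (-1)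
  have hM : {p : (κ → ℝ) × ℝ | ∃ u, 0 ≤ u ∧ B *ᵥ u = p.1 ∧ p.2 ≤ b ⬝ᵥ u} =
      (fun p => Sum.elim p.1 fun _ => p.2) ⁻¹' (M.mulVec '' Ici 0) := by
    ext ⟨v, s⟩
    simp only [mem_ofPred_eq, mem_preimage, mem_image, mem_Ici]
    constructor
    · rintro ⟨u, hu, rfl, hs⟩
      refine ⟨Sum.elim u fun _ => b ⬝ᵥ u - s, fun i => ?_, ?_⟩
      · cases i
        exacts [hu _, by simp [hs]]
      · ext (i | i) <;> simp [M, mulVec, dotProduct]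
    · rintro ⟨z, hz, hzv⟩
      simp only [M, fromBlocks_mulVec, zero_mulVec, add_zero, replicateRow_mulVec_eq_const,
        neg_mulVec, one_mulVec, Sum.elim_eq_iff] at hzv
      refine ⟨z ∘ Sum.inl, fun i => hz (Sum.inl i), hzv.1, ?_⟩
      have hk := congrFun hzv.2 ()
      simp only [Pi.add_apply, const_apply, Pi.neg_apply, Function.comp_apply] at hk
      linarith [show 0 ≤ z (Sum.inr ()) from hz (Sum.inr ())]
  rw [hM]
  exact M.mulVecLin.isClosed_image_Ici_zero.preimage
    (continuous_pi fun i => by cases i <;> simp only [Sum.elim_inl, Sum.elim_inr] <;> fun_prop)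

theorem update_sub_smul_single {κ : Type*} [DecidableEq κ] (w : κ → ℝ) (j : κ) (s k : ℝ) :
    update w j s - k • Pi.single j 1 = update w j (s - k) := by
  ext i
  by_cases h : i = j <;> simp [h]

section LowerImage

variable {q m n o : ℕ}

def coupling (c y t : Fin (q + 1) → ℝ) : ℝ :=
  (∑ i : Fin q, y i.castSucc * t i.castSucc) +
    y (Fin.last q) * (1 - ∑ i : Fin q, c i.castSucc * t i.castSucc) - t (Fin.last q)

/-- The `w` of a point `t = D*(u, w) - k e_q` of the lower image: it agrees with `t` off the
last coordinate and is normalised by `cᵀw = 1`. -/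
def weightOf (c t : Fin (q + 1) → ℝ) : Fin (q + 1) → ℝ :=
  update t (Fin.last q) (1 - ∑ i : Fin q, c i.castSucc * t i.castSucc)

def dualFeasible (A : Matrix (Fin m) (Fin n) ℝ) (P : Matrix (Fin (q + 1)) (Fin n) ℝ)
    (Y : Matrix (Fin (q + 1)) (Fin o) ℝ) (c : Fin (q + 1) → ℝ) :
    Set ((Fin m → ℝ) × (Fin (q + 1) → ℝ)) :=
  {uw | 0 ≤ uw.1 ∧ Aᵀ *ᵥ uw.1 = Pᵀ *ᵥ uw.2 ∧ c ⬝ᵥ uw.2 = 1 ∧ 0 ≤ Yᵀ *ᵥ uw.2}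

def lowerImage (A : Matrix (Fin m) (Fin n) ℝ) (P : Matrix (Fin (q + 1)) (Fin n) ℝ)
    (b : Fin m → ℝ) (Y : Matrix (Fin (q + 1)) (Fin o) ℝ) (c : Fin (q + 1) → ℝ) :
    Set (Fin (q + 1) → ℝ) :=
  {ys | ∃ uw ∈ dualFeasible A P Y c, ∃ k : ℝ, 0 ≤ k ∧
    ys = update uw.2 (Fin.last q) (b ⬝ᵥ uw.1) - k • Pi.single (Fin.last q) 1}

variable {c : Fin (q + 1) → ℝ}

theorem dotProduct_eq_sum_castSucc_add (v t : Fin (q + 1) → ℝ) :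
    v ⬝ᵥ t = ∑ i : Fin q, v i.castSucc * t i.castSucc + v (Fin.last q) * t (Fin.last q) :=
  Fin.sum_univ_castSucc _

theorem coupling_eq (y t : Fin (q + 1) → ℝ) :
    coupling c y t = weightOf c t ⬝ᵥ y - t (Fin.last q) := by
  simp only [coupling, weightOf, dotProduct_eq_sum_castSucc_add, update_self,
    update_of_ne (Fin.castSucc_lt_last _).ne]
  rw [Finset.sum_congr rfl fun i _ => mul_comm (y i.castSucc) (t i.castSucc)]
  ring

theorem dotProduct_weightOf (hcq : c (Fin.last q) = 1) (t : Fin (q + 1) → ℝ) :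
    c ⬝ᵥ weightOf c t = 1 := by
  simp [weightOf, dotProduct_eq_sum_castSucc_add, hcq]

theorem weightOf_update (hcq : c (Fin.last q) = 1) {w : Fin (q + 1) → ℝ} (hcw : c ⬝ᵥ w = 1)
    (s : ℝ) : weightOf c (update w (Fin.last q) s) = w := by
  rw [dotProduct_eq_sum_castSucc_add, hcq, one_mul] at hcw
  ext i
  rcases Fin.eq_castSucc_or_eq_last i with ⟨i, rfl⟩ | rfl
  · simp [weightOf]
  · simp [weightOf]
    linarith

theorem update_weightOf (t : Fin (q + 1) → ℝ) :
    update (weightOf c t) (Fin.last q) (t (Fin.last q)) = t := by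
  simp [weightOf]

theorem mem_lowerImage_iff {A : Matrix (Fin m) (Fin n) ℝ} {P : Matrix (Fin (q + 1)) (Fin n) ℝ}
    {b : Fin m → ℝ} {Y : Matrix (Fin (q + 1)) (Fin o) ℝ} (hcq : c (Fin.last q) = 1)
    {t : Fin (q + 1) → ℝ} :
    t ∈ lowerImage A P b Y c ↔ 0 ≤ Yᵀ *ᵥ weightOf c t ∧
      ∃ u, 0 ≤ u ∧ Aᵀ *ᵥ u = Pᵀ *ᵥ weightOf c t ∧ t (Fin.last q) ≤ b ⬝ᵥ u := by
  constructor
  · rintro ⟨⟨u, w⟩, ⟨hu, hAP, hcw, hY⟩, k, hk, rfl⟩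
    rw [update_sub_smul_single, weightOf_update hcq hcw]
    exact ⟨hY, u, hu, hAP, by simpa using hk⟩
  · rintro ⟨hY, u, hu, hAP, hle⟩
    refine ⟨(u, weightOf c t), ⟨hu, hAP, dotProduct_weightOf hcq t, hY⟩,
      b ⬝ᵥ u - t (Fin.last q), sub_nonneg.mpr hle, ?_⟩
    rw [update_sub_smul_single, sub_sub_cancel, update_weightOf]

theorem exists_coupling_eq_add_const (hcq : c (Fin.last q) = 1) (y : Fin (q + 1) → ℝ) :
    ∃ l : StrongDual ℝ (Fin (q + 1) → ℝ), ∀ t, coupling c y t = l t + y (Fin.last q) := by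
  refine ⟨LinearMap.toContinuousLinearMap
    (dotProductBilin ℝ ℝ (y - y (Fin.last q) • c - Pi.single (Fin.last q) 1)), fun t => ?_⟩
  simp only [LinearMap.coe_toContinuousLinearMap', dotProductBilin_apply_apply, coupling,
    dotProduct_eq_sum_castSucc_add]
  simp [hcq, sub_mul, Finset.sum_sub_distrib, mul_assoc]
  rw [mul_sub, Finset.mul_sum]
  ring

theorem coupling_nonneg {A : Matrix (Fin m) (Fin n) ℝ} {P : Matrix (Fin (q + 1)) (Fin n) ℝ}
    {b : Fin m → ℝ} {Y : Matrix (Fin (q + 1)) (Fin o) ℝ} (hcq : c (Fin.last q) = 1)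
    {t : Fin (q + 1) → ℝ} (ht : t ∈ lowerImage A P b Y c) {x : Fin n → ℝ} {l : Fin o → ℝ}
    (hx : b ≤ A *ᵥ x) (hl : 0 ≤ l) : 0 ≤ coupling c (P *ᵥ x + Y *ᵥ l) t := by
  obtain ⟨hY, u, hu, hAP, hle⟩ := (mem_lowerImage_iff hcq).mp ht
  have hPx := dotProduct_le_of_feasible hu hAP hx
  have hYl := dotProduct_nonneg_of_mem_image_Ici hY ⟨l, hl, rfl⟩
  rw [coupling_eq, dotProduct_add, dotProduct_comm _ (Y *ᵥ l)]
  linarith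

theorem continuous_weightOf : Continuous (weightOf (q := q) c) := by
  unfold weightOf
  fun_prop

theorem isClosed_lowerImage (A : Matrix (Fin m) (Fin n) ℝ) (P : Matrix (Fin (q + 1)) (Fin n) ℝ)
    (b : Fin m → ℝ) (Y : Matrix (Fin (q + 1)) (Fin o) ℝ) (hcq : c (Fin.last q) = 1) :
    IsClosed (lowerImage A P b Y c) := by
  have hsplit : lowerImage A P b Y c = {t | 0 ≤ Yᵀ *ᵥ weightOf c t} ∩
      (fun t => (Pᵀ *ᵥ weightOf c t, t (Fin.last q))) ⁻¹'
        {p | ∃ u, 0 ≤ u ∧ Aᵀ *ᵥ u = p.1 ∧ p.2 ≤ b ⬝ᵥ u} := by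
    ext t
    exact mem_lowerImage_iff hcq
  rw [hsplit]
  have := continuous_weightOf (c := c)
  exact (isClosed_le continuous_const (by fun_prop)).inter
    ((Aᵀ.isClosed_setOf_exists_nonneg_le b).preimage (by fun_prop))

theorem isCompact_lowerImage_inter_coupling_le {A : Matrix (Fin m) (Fin n) ℝ}
    {P : Matrix (Fin (q + 1)) (Fin n) ℝ} {b : Fin m → ℝ} {Y : Matrix (Fin (q + 1)) (Fin o) ℝ}
    {x₀ : Fin n → ℝ} (hx₀ : b ≤ A *ᵥ x₀) (hc : c ∈ interior (Y.mulVec '' Ici 0))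
    (hcq : c (Fin.last q) = 1) (y : Fin (q + 1) → ℝ) (r : ℝ) :
    IsCompact (lowerImage A P b Y c ∩ {t | coupling c y t ≤ r}) := by
  -- `t` is recovered from `(weightOf c t, t_q)`, which ranges over a compact box
  obtain ⟨R, hR⟩ := exists_norm_le_of_mem_interior hc
  have hball := isCompact_closedBall (0 : Fin (q + 1) → ℝ) R
  obtain ⟨C₁, hC₁⟩ := hball.exists_bound_of_continuousOn
    (f := fun w => w ⬝ᵥ (P *ᵥ x₀)) (by fun_prop)
  obtain ⟨C₂, hC₂⟩ := hball.exists_bound_of_continuousOn (f := fun w => w ⬝ᵥ y) (by fun_prop)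
  refine ((hball.prod (isCompact_Icc (a := -C₂ - r) (b := C₁))).image
    (f := fun p => update p.1 (Fin.last q) p.2) (by fun_prop)).of_isClosed_subset
    ((isClosed_lowerImage A P b Y hcq).inter (isClosed_le (by unfold coupling; fun_prop)
      continuous_const)) ?_
  rintro t ⟨ht, htr⟩
  obtain ⟨hY, u, hu, hAP, hle⟩ := (mem_lowerImage_iff hcq).mp ht
  have hw : weightOf c t ∈ Metric.closedBall 0 R :=
    mem_closedBall_zero_iff.mpr (hR _ hY (dotProduct_weightOf hcq t))
  have hPx := dotProduct_le_of_feasible hu hAP hx₀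
  have hC₁t := abs_le.mp (hC₁ _ hw)
  have hC₂t := abs_le.mp (hC₂ _ hw)
  rw [mem_ofPred_eq, coupling_eq] at htr
  exact ⟨(weightOf c t, t (Fin.last q)), ⟨hw, by linarith, by linarith⟩, update_weightOf t⟩

theorem exists_mem_lowerImage_coupling_neg {A : Matrix (Fin m) (Fin n) ℝ}
    {P : Matrix (Fin (q + 1)) (Fin n) ℝ} {b : Fin m → ℝ} {Y : Matrix (Fin (q + 1)) (Fin o) ℝ}
    {x₀ : Fin n → ℝ} (hx₀ : b ≤ A *ᵥ x₀) (hc : c ∈ interior (Y.mulVec '' Ici 0))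
    (hcq : c (Fin.last q) = 1) {y : Fin (q + 1) → ℝ}
    (hy : ∀ x l, b ≤ A *ᵥ x → 0 ≤ l → P *ᵥ x + Y *ᵥ l ≠ y) :
    ∃ t ∈ lowerImage A P b Y c, coupling c y t < 0 := by
  obtain ⟨u, w, hu, hAP, hY, hlt⟩ := exists_dual_dotProduct_lt_of_forall_ne A P Y hy
  have hw : w ≠ 0 := by
    rintro rfl
    have := dotProduct_le_of_feasible hu hAP hx₀
    simp only [zero_dotProduct] at this hlt
    linarith
  have hs : 0 < (c ⬝ᵥ w)⁻¹ := inv_pos.mpr (dotProduct_pos_of_mem_interior hc hY hw)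
  have hcw : c ⬝ᵥ (c ⬝ᵥ w)⁻¹ • w = 1 := by
    rw [dotProduct_smul, smul_eq_mul, inv_mul_cancel₀ (inv_pos.mp hs).ne']
  refine ⟨update ((c ⬝ᵥ w)⁻¹ • w) (Fin.last q) (b ⬝ᵥ (c ⬝ᵥ w)⁻¹ • u),
    ⟨((c ⬝ᵥ w)⁻¹ • u, (c ⬝ᵥ w)⁻¹ • w), ⟨smul_nonneg hs.le hu, by simp [mulVec_smul, hAP], hcw,
      by simpa [mulVec_smul] using smul_nonneg hs.le hY⟩, 0, le_rfl, by simp⟩, ?_⟩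
  rw [coupling_eq, weightOf_update hcq hcw, update_self, smul_dotProduct, dotProduct_smul,
    smul_eq_mul, smul_eq_mul, ← mul_sub]
  exact mul_neg_of_pos_of_neg hs (by linarith)

end LowerImage

theorem stmt15_general (q m n o : ℕ)
    (A : Matrix (Fin m) (Fin n) ℝ) (P : Matrix (Fin (q + 1)) (Fin n) ℝ) (b : Fin m → ℝ)
    (Y : Matrix (Fin (q + 1)) (Fin o) ℝ)
    (C : Set (Fin (q + 1) → ℝ))
    (hCY : C = {y | ∃ l : Fin o → ℝ, 0 ≤ l ∧ y = Y.mulVec l})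
    (c : Fin (q + 1) → ℝ) (hc : c ∈ interior C) (hcq : c (Fin.last q) = 1)
    (S : Set (Fin n → ℝ)) (hS : S = {x | b ≤ A.mulVec x}) (hSne : S.Nonempty)
    (UpperIm : Set (Fin (q + 1) → ℝ))
    (hUpperIm : UpperIm = {y | ∃ x ∈ S, ∃ cc ∈ C, y = P.mulVec x + cc})
    (T : Set ((Fin m → ℝ) × (Fin (q + 1) → ℝ)))
    (hT : T = {uw | 0 ≤ uw.1 ∧ A.transpose.mulVec uw.1 = P.transpose.mulVec uw.2 ∧
      c ⬝ᵥ uw.2 = 1 ∧ 0 ≤ Y.transpose.mulVec uw.2})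
    (LowerIm : Set (Fin (q + 1) → ℝ))
    (hLowerIm : LowerIm = {ys | ∃ uw ∈ T, ∃ k : ℝ, 0 ≤ k ∧
      ys = Function.update uw.2 (Fin.last q) (b ⬝ᵥ uw.1) - k • (Pi.single (Fin.last q) 1 : Fin (q + 1) → ℝ)})
    (φ : (Fin (q + 1) → ℝ) → (Fin (q + 1) → ℝ) → ℝ)
    (hφ : ∀ y ys, φ y ys = (∑ i : Fin q, y i.castSucc * ys i.castSucc) +
      y (Fin.last q) * (1 - ∑ i : Fin q, c i.castSucc * ys i.castSucc) - ys (Fin.last q)) :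
    UpperIm = {y | ∀ ts ∈ Set.extremePoints ℝ LowerIm, 0 ≤ φ y ts} := by
  obtain rfl : C = Y.mulVec '' Ici 0 := hCY.trans (by ext; simp [eq_comm])
  obtain rfl : φ = coupling c := funext fun y => funext (hφ y)
  obtain rfl : LowerIm = lowerImage A P b Y c := hLowerIm.trans (by rw [hT]; rfl)
  subst hS hUpperIm
  obtain ⟨x₀, hx₀⟩ := hSne
  ext y
  constructor
  · rintro ⟨x, hx, _, ⟨l, hl, rfl⟩, rfl⟩ t ht
    exact coupling_nonneg hcq (extremePoints_subset ht) hx hl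
  · intro hy
    by_contra hyP
    obtain ⟨t₀, ht₀, hneg⟩ := exists_mem_lowerImage_coupling_neg hx₀ hc hcq (y := y)
      fun x l hx hl hxl => hyP ⟨x, hx, _, ⟨l, hl, rfl⟩, hxl.symm⟩
    obtain ⟨l, hl⟩ := exists_coupling_eq_add_const hcq y
    have hK := isCompact_lowerImage_inter_coupling_le (P := P) hx₀ hc hcq y (coupling c y t₀)
    simp only [hl, add_le_add_iff_right] at hK
    obtain ⟨e, he, hmin⟩ :=
      exists_mem_extremePoints_forall_le (isClosed_lowerImage A P b Y hcq) l ht₀ hK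
    linarith [hy e he, hmin t₀ ht₀, hl e, hl t₀]

/-- Ambient space `ℝ^{q+1}` (the paper's `ℝ^q`).  If `S ≠ ∅`, `T ≠ ∅`
and the lower image has at least one vertex (extreme point), then the upper image equals
the set of points `y` with `φ(y, t*) ≥ 0` for every vertex `t*` of the lower image. -/
theorem stmt15 (q m n o p : ℕ)
    (A : Matrix (Fin m) (Fin n) ℝ) (P : Matrix (Fin (q + 1)) (Fin n) ℝ) (b : Fin m → ℝ)
    (Y : Matrix (Fin (q + 1)) (Fin o) ℝ) (Z : Matrix (Fin (q + 1)) (Fin p) ℝ)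
    (C : Set (Fin (q + 1) → ℝ))
    (hCZ : C = {y | 0 ≤ Z.transpose.mulVec y})
    (hCY : C = {y | ∃ l : Fin o → ℝ, 0 ≤ l ∧ y = Y.mulVec l})
    (hC_pointed : C ∩ (-C) = {0})
    (hC_solid : (interior C).Nonempty)
    (c : Fin (q + 1) → ℝ) (hc : c ∈ interior C) (hcq : c (Fin.last q) = 1)
    (S : Set (Fin n → ℝ)) (hS : S = {x | b ≤ A.mulVec x}) (hSne : S.Nonempty)
    (UpperIm : Set (Fin (q + 1) → ℝ))
    (hUpperIm : UpperIm = {y | ∃ x ∈ S, ∃ cc ∈ C, y = P.mulVec x + cc})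
    (T : Set ((Fin m → ℝ) × (Fin (q + 1) → ℝ)))
    (hT : T = {uw | 0 ≤ uw.1 ∧ A.transpose.mulVec uw.1 = P.transpose.mulVec uw.2 ∧
      c ⬝ᵥ uw.2 = 1 ∧ 0 ≤ Y.transpose.mulVec uw.2})
    (hTne : T.Nonempty)
    (LowerIm : Set (Fin (q + 1) → ℝ))
    (hLowerIm : LowerIm = {ys | ∃ uw ∈ T, ∃ k : ℝ, 0 ≤ k ∧
      ys = Function.update uw.2 (Fin.last q) (b ⬝ᵥ uw.1) - k • (Pi.single (Fin.last q) 1 : Fin (q + 1) → ℝ)})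
    (hvert : (Set.extremePoints ℝ LowerIm).Nonempty)
    (φ : (Fin (q + 1) → ℝ) → (Fin (q + 1) → ℝ) → ℝ)
    (hφ : ∀ y ys, φ y ys = (∑ i : Fin q, y i.castSucc * ys i.castSucc) +
      y (Fin.last q) * (1 - ∑ i : Fin q, c i.castSucc * ys i.castSucc) - ys (Fin.last q)) :
    UpperIm = {y | ∀ ts ∈ Set.extremePoints ℝ LowerIm, 0 ≤ φ y ts} :=
  stmt15_general q m n o A P b Y C hCY c hc hcq S hS hSne UpperIm hUpperIm T hT LowerIm hLowerIm φ
    hφ
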